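/- arXiv:1209.6279 — 3 statements merged into one kernel-verified Lean document; each statement's English description precedes it below -/
import Mathlib

section
/- Let A be a local Noetherian k-algebra with residue field k, and let M be a finitely generated A-module. If for every ideal I ⊂ A with A/I of finite k-dimension n one has dim_k(M ⊗_A A/I) = n · dim_k(M ⊗_A k), then M is a free A-module. -/
/-!
Lift a `k`-basis of `M ⧸ 𝔪M` to a surjection `π : A^d → M` (Nakayama). For `I = 𝔪^t` the
hypothesis says that `A^d ⧸ 𝔪^t A^d` and `M ⧸ 𝔪^t M` have the same finite `k`-dimension, so
the surjection between them induced by `π` is injective and `ker π ⊆ 𝔪^t A^d`. By Krull's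
intersection theorem `ker π = 0`.
-/

open IsLocalRing Module

lemma Submodule.isTorsionBySet_ker_factor_smul {A M : Type*} [CommRing A] [AddCommGroup M]
    [Module A M] (I : Ideal A) (N : Submodule A M) :
    IsTorsionBySet A (LinearMap.ker (factor (smul_le_right : I • N ≤ N))) I := by
  rintro ⟨q, hq⟩ ⟨a, ha⟩
  obtain ⟨m, rfl⟩ := Quotient.mk_surjective _ q
  have hm : m ∈ N := by simpa using hq
  ext
  simpa [← Quotient.mk_smul] using smul_mem_smul ha hm

section ResidueField

variable {k A N : Type*} [Field k] [CommRing A] [Algebra k A] [IsLocalRing A]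
  [AddCommGroup N] [Module A N] [Module k N] [IsScalarTower k A N]

lemma exists_smul_eq_smul_of_isTorsionBySet_maximalIdeal
    (hres : Function.Surjective (algebraMap k (ResidueField A)))
    (hN : IsTorsionBySet A N (maximalIdeal A)) (a : A) :
    ∃ c : k, ∀ x : N, a • x = c • x := by
  obtain ⟨c, hc⟩ := hres (residue A a)
  refine ⟨c, fun x => ?_⟩
  have hmem : a - algebraMap k A c ∈ maximalIdeal A := by
    rw [← residue_eq_zero_iff, map_sub, sub_eq_zero, ← hc]
    rfl
  rw [← algebraMap_smul A c x, ← sub_eq_zero, ← sub_smul]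
  exact hN (a := ⟨_, hmem⟩)

lemma Module.finite_of_isTorsionBySet_maximalIdeal
    (hres : Function.Surjective (algebraMap k (ResidueField A)))
    (hN : IsTorsionBySet A N (maximalIdeal A)) [Module.Finite A N] : Module.Finite k N := by
  obtain ⟨s, hs⟩ := Module.Finite.fg_top (R := A) (M := N)
  let P : Submodule A N :=
    { (Submodule.span k (s : Set N)).toAddSubmonoid with
      smul_mem' := fun a x hx => by
        obtain ⟨c, hc⟩ := exists_smul_eq_smul_of_isTorsionBySet_maximalIdeal hres hN a
        rw [hc]
        exact Submodule.smul_mem _ c hx }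
  have hP : Submodule.span A (s : Set N) ≤ P := Submodule.span_le.2 Submodule.subset_span
  exact ⟨⟨s, eq_top_iff.2 fun x _ => hP (hs ▸ Submodule.mem_top)⟩⟩

lemma finiteDimensional_quotient_pow_maximalIdeal [IsNoetherianRing A]
    (hres : Function.Surjective (algebraMap k (ResidueField A))) (t : ℕ) :
    FiniteDimensional k (A ⧸ maximalIdeal A ^ t) := by
  induction t with
  | zero =>
    rw [pow_zero, Ideal.one_eq_top]
    infer_instance
  | succ t ih =>
    rw [pow_succ', ← Ideal.smul_eq_mul]
    have hle : maximalIdeal A • maximalIdeal A ^ t ≤ maximalIdeal A ^ t :=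
      Submodule.smul_le_right
    let g := Submodule.factor hle
    have : Module.Finite k (LinearMap.ker g) := Module.finite_of_isTorsionBySet_maximalIdeal hres
      (Submodule.isTorsionBySet_ker_factor_smul _ _)
    have hex : Function.Exact ((LinearMap.ker g).subtype.restrictScalars k)
        (g.restrictScalars k) := g.exact_subtype_ker_map
    have hg : Function.Surjective (g.restrictScalars k) := Submodule.factor_surjective hle
    exact Module.Finite.of_exact hex hg

end ResidueField

section QuotientSMulTop

variable {k A : Type*} [Field k] [CommRing A] [Algebra k A]

noncomputable def quotientSMulTopPiEquiv (I : Ideal A) (ι : Type*) [Fintype ι] [DecidableEq ι] :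
    ((ι → A) ⧸ (I • ⊤ : Submodule A (ι → A))) ≃ₗ[A] ι → A ⧸ I :=
  (TensorProduct.quotTensorEquivQuotSMul (ι → A) I).symm ≪≫ₗ
    TensorProduct.piScalarRight A A (A ⧸ I) ι

instance (I : Ideal A) (ι : Type*) [Fintype ι] [FiniteDimensional k (A ⧸ I)] :
    FiniteDimensional k ((ι → A) ⧸ (I • ⊤ : Submodule A (ι → A))) := by
  classical
  exact .equiv ((quotientSMulTopPiEquiv I ι).restrictScalars k).symm

lemma finrank_quotient_smul_top_pi (I : Ideal A) (ι : Type*) [Fintype ι]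
    [FiniteDimensional k (A ⧸ I)] :
    finrank k ((ι → A) ⧸ (I • ⊤ : Submodule A (ι → A))) =
      Fintype.card ι * finrank k (A ⧸ I) := by
  classical
  rw [((quotientSMulTopPiEquiv I ι).restrictScalars k).finrank_eq, finrank_pi_fintype,
    Finset.sum_const, Finset.card_univ, smul_eq_mul]

variable {M N : Type*} [AddCommGroup M] [Module A M] [Module k M] [IsScalarTower k A M]
  [AddCommGroup N] [Module A N] [Module k N] [IsScalarTower k A N]

lemma LinearMap.ker_le_smul_top_of_finrank_quotient_eq {f : N →ₗ[A] M}
    (hf : Function.Surjective f) (I : Ideal A)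
    [FiniteDimensional k (N ⧸ (I • ⊤ : Submodule A N))]
    (h : finrank k (N ⧸ (I • ⊤ : Submodule A N)) = finrank k (M ⧸ (I • ⊤ : Submodule A M))) :
    ker f ≤ I • ⊤ := by
  let g := (Submodule.mapQ _ _ f (Submodule.smul_top_le_comap_smul_top I f)).restrictScalars k
  have hg : Function.Surjective g := by
    rw [← LinearMap.range_eq_top, LinearMap.range_restrictScalars,
      Submodule.restrictScalars_eq_top_iff, Submodule.range_mapQ,
      LinearMap.range_eq_top.2 hf, Submodule.map_top, Submodule.range_mkQ]
  have : FiniteDimensional k (M ⧸ (I • ⊤ : Submodule A M)) := .of_surjective g hg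
  have hg_inj : Function.Injective g := (injective_iff_surjective_of_finrank_eq_finrank h).2 hg
  intro x hx
  rw [← Submodule.Quotient.mk_eq_zero]
  exact hg_inj (by simp [g, LinearMap.mem_ker.1 hx])

end QuotientSMulTop

lemma IsLocalRing.exists_surjective_of_finrank_quotient_maximalIdeal {k A M : Type*} [Field k]
    [CommRing A] [Algebra k A] [IsLocalRing A] [AddCommGroup M] [Module A M] [Module k M]
    [IsScalarTower k A M] [Module.Finite A M]
    (hres : Function.Surjective (algebraMap k (ResidueField A))) :
    ∃ π : (Fin (finrank k (M ⧸ (maximalIdeal A • ⊤ : Submodule A M))) → A) →ₗ[A] M,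
      Function.Surjective π := by
  have : Module.Finite k (M ⧸ (maximalIdeal A • ⊤ : Submodule A M)) :=
    Module.finite_of_isTorsionBySet_maximalIdeal hres (isTorsionBySet_quotient_ideal_smul M _)
  let b := finBasis k (M ⧸ (maximalIdeal A • ⊤ : Submodule A M))
  choose x hx using fun i => Submodule.Quotient.mk_surjective _ (b i)
  refine ⟨Fintype.linearCombination A x, ?_⟩
  have hb : Submodule.mkQ _ ∘ x = b := funext hx
  -- Nakayama: it suffices that the images of the `x i` span `M ⧸ 𝔪M`.
  rw [← LinearMap.range_eq_top, Fintype.range_linearCombination, ← map_mkQ_eq_top,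
    Submodule.map_span, ← Set.range_comp, hb, ← Submodule.restrictScalars_eq_top_iff k,
    eq_top_iff, ← b.span_eq]
  exact Submodule.span_le_restrictScalars k A _

/-- If for every ideal `I ⊂ A` of finite colength `n = dim_k (A ⧸ I)` one has
`dim_k (M ⊗_A A/I) = n * dim_k (M ⊗_A k)` (with `M ⊗_A A/I` realized as `M ⧸ IM`
and `M ⊗_A k` as `M ⧸ 𝔪M`), then the finitely generated module `M` over the local
Noetherian `k`-algebra `A` with residue field `k` is free. -/
theorem flatness_criterion_all_ideals {k A M : Type*} [Field k] [CommRing A] [Algebra k A]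
    [IsLocalRing A] [IsNoetherianRing A]
    [AddCommGroup M] [Module A M] [Module k M] [IsScalarTower k A M] [Module.Finite A M]
    (hres : Function.Bijective (algebraMap k (ResidueField A)))
    (H : ∀ I : Ideal A, FiniteDimensional k (A ⧸ I) →
      finrank k (M ⧸ (I • ⊤ : Submodule A M)) =
        finrank k (A ⧸ I) *
          finrank k (M ⧸ ((maximalIdeal A) • ⊤ : Submodule A M))) :
    Module.Free A M := by
  obtain ⟨π, hπ⟩ :=
    exists_surjective_of_finrank_quotient_maximalIdeal hres.surjective (M := M)
  have hker (t : ℕ) : LinearMap.ker π ≤ maximalIdeal A ^ t • ⊤ := by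
    have := finiteDimensional_quotient_pow_maximalIdeal hres.surjective t
    refine π.ker_le_smul_top_of_finrank_quotient_eq (k := k) hπ _ ?_
    rw [finrank_quotient_smul_top_pi, H _ this, Fintype.card_fin, mul_comm]
  have hinj : LinearMap.ker π = ⊥ := eq_bot_iff.2 <| (le_iInf hker).trans
    (Ideal.iInf_pow_smul_eq_bot_of_isLocalRing _ (maximalIdeal.isMaximal A).ne_top).le
  exact .of_equiv (LinearEquiv.ofBijective π ⟨LinearMap.ker_eq_bot.1 hinj, hπ⟩)
end

section
/- Let A be a local Noetherian k-algebra with maximal ideal 𝔪 and residue field k, M a finitely generated A-module, and I ⊂ A an ideal with dim_k(A/I) = n. If dim_k(M ⊗_A A/I) = n · dim_k(M ⊗_A k), then Tor₁^{A/I}(M/IM, k) = 0, i.e., M/IM is a flat A/I-module. -/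
/-!
Lift a `k`-basis of `M/𝔪M` to `r = dim_k (M/𝔪M)` elements of `M`; by Nakayama they generate `M`,
so they give a surjection `(A/I)^r → M/IM`. Both sides have `k`-dimension `n · r`, so it is an
isomorphism and `M/IM` is free, hence flat. Tensoring a projective resolution of the second
argument with a flat module keeps it exact, so the higher `Tor` vanish.
-/

open IsLocalRing Module CategoryTheory

universe u

theorem ModuleCat.isZero_Tor_succ_of_flat {R : Type u} [CommRing R] (X Y : ModuleCat.{u} R)
    [Module.Flat R X] (n : ℕ) : Limits.IsZero (((Tor (ModuleCat R) (n + 1)).obj X).obj Y) := by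
  let P : ProjectiveResolution Y := HasProjectiveResolution.out.some
  refine .of_iso ?_ (P.isoLeftDerivedObj ((MonoidalCategory.tensoringLeft _).obj X) (n + 1))
  rw [HomologicalComplex.homologyFunctor_obj, ← HomologicalComplex.exactAt_iff_isZero_homology,
    HomologicalComplex.exactAt_iff]
  have hsc : ((((MonoidalCategory.tensoringLeft _).obj X).mapHomologicalComplex _).obj
      P.complex).sc (n + 1) = (P.complex.sc (n + 1)).map (MonoidalCategory.tensorLeft X) := rfl
  rw [hsc]
  exact Module.Flat.lTensor_shortComplex_exact X _
    ((HomologicalComplex.exactAt_iff _ _).mp (P.complex_exactAt_succ n))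

theorem Module.free_of_span_eq_top_of_finrank_eq {k R N ι : Type*} [Field k] [CommRing R]
    [Algebra k R] [Module.Finite k R] [AddCommGroup N] [Module R N] [Module k N]
    [IsScalarTower k R N] [Fintype ι] {v : ι → N} (hv : Submodule.span R (Set.range v) = ⊤)
    (hdim : finrank k N = finrank k R * Fintype.card ι) : Module.Free R N := by
  have hsurj : Function.Surjective (Finsupp.linearCombination R v) := by
    rwa [← LinearMap.range_eq_top, Finsupp.range_linearCombination]
  have : Module.Finite R N := .of_surjective _ hsurj
  have : Module.Finite k N := .trans R N
  have hinj : Function.Injective ((Finsupp.linearCombination R v).restrictScalars k) := by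
    rw [LinearMap.injective_iff_surjective_of_finrank_eq_finrank]
    · exact hsurj
    · rw [(Finsupp.linearEquivFunOnFinite k R ι).finrank_eq, Module.finrank_pi_fintype,
        Finset.sum_const, Finset.card_univ, smul_eq_mul, hdim, mul_comm]
  exact .of_equiv (LinearEquiv.ofBijective _ ⟨hinj, hsurj⟩)

theorem IsLocalRing.span_eq_top_of_span_mkQ_eq_top {k A M ι : Type*} [CommSemiring k]
    [CommRing A] [Algebra k A] [IsLocalRing A] [AddCommGroup M] [Module A M] [Module k M]
    [IsScalarTower k A M] [Module.Finite A M] {v : ι → M}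
    (hv : Submodule.span k (Set.range ((maximalIdeal A • ⊤ : Submodule A M).mkQ ∘ v)) = ⊤) :
    Submodule.span A (Set.range v) = ⊤ := by
  rw [← map_mkQ_eq_top, Submodule.map_span, ← Set.range_comp,
    ← Submodule.restrictScalars_eq_top_iff k]
  exact top_le_iff.mp (hv ▸ Submodule.span_le_restrictScalars k A _)

theorem Submodule.span_range_mkQ_comp_eq_top {A M ι : Type*} [CommRing A] [AddCommGroup M]
    [Module A M] (I : Ideal A) {v : ι → M} (hv : Submodule.span A (Set.range v) = ⊤) :
    Submodule.span (A ⧸ I) (Set.range ((I • ⊤ : Submodule A M).mkQ ∘ v)) = ⊤ := by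
  rw [← Submodule.restrictScalars_eq_top_iff A, Submodule.restrictScalars_span A (A ⧸ I)
    Ideal.Quotient.mk_surjective, Set.range_comp, ← Submodule.map_span, hv, Submodule.map_top,
    Submodule.range_mkQ]

theorem IsLocalRing.free_quotient_smul_top_of_finrank_eq {k A M : Type*} [Field k] [CommRing A]
    [Algebra k A] [IsLocalRing A] [AddCommGroup M] [Module A M] [Module k M]
    [IsScalarTower k A M] [Module.Finite A M] (I : Ideal A) [FiniteDimensional k (A ⧸ I)]
    (hdim : finrank k (M ⧸ (I • ⊤ : Submodule A M)) =
      finrank k (A ⧸ I) * finrank k (M ⧸ (maximalIdeal A • ⊤ : Submodule A M))) :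
    Module.Free (A ⧸ I) (M ⧸ (I • ⊤ : Submodule A M)) := by
  by_cases hI : I = ⊤
  · have : Subsingleton (M ⧸ (I • ⊤ : Submodule A M)) := by
      simp [Submodule.Quotient.subsingleton_iff, hI]
    exact .of_subsingleton _ _
  have : Module.Finite (A ⧸ I) (M ⧸ (I • ⊤ : Submodule A M)) := .of_restrictScalars_finite A _ _
  have : Module.Finite k (M ⧸ (I • ⊤ : Submodule A M)) := .trans (A ⧸ I) _
  have : FiniteDimensional k (M ⧸ (maximalIdeal A • ⊤ : Submodule A M)) :=
    have hle : I • (⊤ : Submodule A M) ≤ maximalIdeal A • ⊤ :=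
      Submodule.smul_mono_left (le_maximalIdeal hI)
    .of_surjective ((Submodule.factor hle).restrictScalars k) (Submodule.factor_surjective hle)
  let b := finBasis k (M ⧸ (maximalIdeal A • ⊤ : Submodule A M))
  choose v hv using fun i => Submodule.mkQ_surjective _ (b i)
  have hspan : Submodule.span A (Set.range v) = ⊤ :=
    span_eq_top_of_span_mkQ_eq_top (k := k) (by rw [show _ ∘ v = b from funext hv, b.span_eq])
  exact Module.free_of_span_eq_top_of_finrank_eq (k := k)
    (Submodule.span_range_mkQ_comp_eq_top I hspan) (by rw [hdim, Fintype.card_fin])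

theorem truncation_flat_of_dim_eq_general {k A M : Type} [Field k] [CommRing A] [Algebra k A]
    [IsLocalRing A]
    [AddCommGroup M] [Module A M] [Module k M] [IsScalarTower k A M] [Module.Finite A M]
    (I : Ideal A) [FiniteDimensional k (A ⧸ I)]
    (hdim : finrank k (M ⧸ (I • ⊤ : Submodule A M)) =
      finrank k (A ⧸ I) *
        finrank k (M ⧸ ((maximalIdeal A) • ⊤ : Submodule A M))) :
    Subsingleton
        (((Tor (ModuleCat (A ⧸ I)) 1).obj
            (ModuleCat.of (A ⧸ I) (M ⧸ (I • ⊤ : Submodule A M)))).obj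
          (ModuleCat.of (A ⧸ I)
            ((A ⧸ I) ⧸ (maximalIdeal A).map (Ideal.Quotient.mk I)))) ∧
      Module.Flat (A ⧸ I) (M ⧸ (I • ⊤ : Submodule A M)) := by
  have : Module.Free (A ⧸ I) (M ⧸ (I • ⊤ : Submodule A M)) :=
    free_quotient_smul_top_of_finrank_eq I hdim
  exact ⟨ModuleCat.subsingleton_of_isZero (ModuleCat.isZero_Tor_succ_of_flat _ _ 0),
    inferInstance⟩

/-- If `I` is an ideal of finite colength `n = dim_k (A/I)` in the local Noetherian
`k`-algebra `A` with residue field `k`, `M` a finitely generated `A`-module, and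
`dim_k (M ⊗_A A/I) = n · dim_k (M ⊗_A k)`, then `Tor₁^{A/I}(M/IM, k) = 0`,
i.e. `M/IM` is a flat `A/I`-module (here `k` is realized over `A/I` as
`(A/I) ⧸ 𝔪(A/I)` with `𝔪(A/I)` the image of the maximal ideal). -/
theorem truncation_flat_of_dim_eq {k A M : Type} [Field k] [CommRing A] [Algebra k A]
    [IsLocalRing A] [IsNoetherianRing A]
    [AddCommGroup M] [Module A M] [Module k M] [IsScalarTower k A M] [Module.Finite A M]
    (hres : Function.Bijective (algebraMap k (ResidueField A)))
    (I : Ideal A) [FiniteDimensional k (A ⧸ I)]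
    (hdim : finrank k (M ⧸ (I • ⊤ : Submodule A M)) =
      finrank k (A ⧸ I) *
        finrank k (M ⧸ ((maximalIdeal A) • ⊤ : Submodule A M))) :
    Subsingleton
        (((Tor (ModuleCat (A ⧸ I)) 1).obj
            (ModuleCat.of (A ⧸ I) (M ⧸ (I • ⊤ : Submodule A M)))).obj
          (ModuleCat.of (A ⧸ I)
            ((A ⧸ I) ⧸ (maximalIdeal A).map (Ideal.Quotient.mk I)))) ∧
      Module.Flat (A ⧸ I) (M ⧸ (I • ⊤ : Submodule A M)) :=
  truncation_flat_of_dim_eq_general I hdim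
end

section
/- Let A be a local Noetherian k-algebra with maximal ideal 𝔪 and residue field k, and M a finitely generated A-module. If dim_k(M ⊗_A A/𝔪ⁿ) = dim_k(A/𝔪ⁿ) · dim_k(M ⊗_A k) for all n > 0, then for every ideal I ⊂ A of finite colength ℓ one has dim_k(M ⊗_A A/I) = ℓ · dim_k(M ⊗_A k). -/
open IsLocalRing Module

/-!
Lifting a `k`-basis of `M/𝔪M` gives, by Nakayama, a surjection `φ : A^r → M` with
`r = dim_k M/𝔪M`. For an ideal `J` of finite colength, `φ` induces a surjection
`(A/J)^r → M/JM`, so `dim_k M/JM = r · dim_k A/J` exactly when `ker φ ⊆ J·A^r`.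
The hypothesis therefore gives `ker φ ⊆ 𝔪ⁿ·A^r` for all `n > 0`, and this passes to `I`
because `A/I` is Artinian, so that `I` contains a power of `𝔪`.
-/

open Submodule Function

section QuotientSMulTop

variable {k A M N : Type*} [Field k] [CommRing A] [Algebra k A]
  [AddCommGroup M] [Module A M] [Module k M] [IsScalarTower k A M]
  [AddCommGroup N] [Module A N] [Module k N] [IsScalarTower k A N]

lemma Submodule.mapQ_smul_top_surjective (J : Ideal A) {φ : N →ₗ[A] M} (hφ : Surjective φ) :
    Surjective (mapQ (J • ⊤) (J • ⊤) φ (smul_top_le_comap_smul_top J φ)) := by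
  rw [← LinearMap.range_eq_top, range_mapQ, LinearMap.range_eq_top.mpr hφ, map_top, range_mkQ]

lemma Submodule.mapQ_smul_top_injective_iff (J : Ideal A) {φ : N →ₗ[A] M} (hφ : Surjective φ) :
    Injective (mapQ (J • ⊤) (J • ⊤) φ (smul_top_le_comap_smul_top J φ)) ↔
      LinearMap.ker φ ≤ J • ⊤ := by
  rw [← LinearMap.ker_eq_bot, ker_mapQ, comap_smul_top_of_surjective J φ hφ, eq_bot_iff,
    map_le_iff_le_comap, comap_bot, ker_mkQ, sup_le_iff]
  exact and_iff_right le_rfl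

lemma finiteDimensional_quotient_smul_top_of_surjective (J : Ideal A) {φ : N →ₗ[A] M}
    (hφ : Surjective φ) [FiniteDimensional k (N ⧸ (J • ⊤ : Submodule A N))] :
    FiniteDimensional k (M ⧸ (J • ⊤ : Submodule A M)) :=
  Module.Finite.of_surjective (((J • ⊤ : Submodule A N).mapQ (J • ⊤) φ
    (smul_top_le_comap_smul_top J φ)).restrictScalars k) (mapQ_smul_top_surjective J hφ)

lemma finrank_quotient_smul_top_eq_iff (J : Ideal A) {φ : N →ₗ[A] M} (hφ : Surjective φ)
    [FiniteDimensional k (N ⧸ (J • ⊤ : Submodule A N))] :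
    finrank k (M ⧸ (J • ⊤ : Submodule A M)) = finrank k (N ⧸ (J • ⊤ : Submodule A N)) ↔
      LinearMap.ker φ ≤ J • ⊤ := by
  set ψ := ((J • ⊤ : Submodule A N).mapQ (J • ⊤) φ
    (smul_top_le_comap_smul_top J φ)).restrictScalars k
  have hψ : LinearMap.range ψ = ⊤ := LinearMap.range_eq_top.mpr (mapQ_smul_top_surjective J hφ)
  rw [← mapQ_smul_top_injective_iff J hφ, ← ψ.finrank_range_add_finrank_ker, hψ, finrank_top,
    left_eq_add, Submodule.finrank_eq_zero, LinearMap.ker_eq_bot]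
  rfl

noncomputable def piQuotientSMulTopEquiv (ι : Type*) [Fintype ι] [DecidableEq ι] (J : Ideal A) :
    ((ι → A) ⧸ (J • ⊤ : Submodule A (ι → A))) ≃ₗ[A] (ι → A ⧸ J) :=
  (TensorProduct.quotTensorEquivQuotSMul (ι → A) J).symm ≪≫ₗ
    TensorProduct.piScalarRight A A (A ⧸ J) ι

instance finiteDimensional_pi_quotient_smul_top {ι : Type*} [Finite ι] (J : Ideal A)
    [FiniteDimensional k (A ⧸ J)] :
    FiniteDimensional k ((ι → A) ⧸ (J • ⊤ : Submodule A (ι → A))) := by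
  classical
  have := Fintype.ofFinite ι
  exact Module.Finite.equiv ((piQuotientSMulTopEquiv ι J).restrictScalars k).symm

lemma finrank_pi_quotient_smul_top {ι : Type*} [Fintype ι] (J : Ideal A)
    [FiniteDimensional k (A ⧸ J)] :
    finrank k ((ι → A) ⧸ (J • ⊤ : Submodule A (ι → A))) = Fintype.card ι * finrank k (A ⧸ J) := by
  classical
  rw [((piQuotientSMulTopEquiv ι J).restrictScalars k).finrank_eq, finrank_pi_fintype,
    Finset.sum_const, Finset.card_univ, smul_eq_mul]

lemma finiteDimensional_quotient_smul_top [Module.Finite A M] (J : Ideal A)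
    [FiniteDimensional k (A ⧸ J)] : FiniteDimensional k (M ⧸ (J • ⊤ : Submodule A M)) := by
  obtain ⟨n, φ, hφ⟩ := Module.Finite.exists_fin' A M
  exact finiteDimensional_quotient_smul_top_of_surjective J hφ

end QuotientSMulTop

lemma IsLocalRing.exists_surjective_of_finrank_quotient_smul_top (k : Type*) {A M : Type*}
    [Field k] [CommRing A] [Algebra k A] [IsLocalRing A]
    [AddCommGroup M] [Module A M] [Module k M] [IsScalarTower k A M] [Module.Finite A M]
    [FiniteDimensional k (M ⧸ (maximalIdeal A • ⊤ : Submodule A M))] :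
    ∃ φ : (Fin (finrank k (M ⧸ (maximalIdeal A • ⊤ : Submodule A M))) → A) →ₗ[A] M,
      Surjective φ := by
  let b := Module.finBasis k (M ⧸ (maximalIdeal A • ⊤ : Submodule A M))
  choose m hm using fun i ↦ Submodule.Quotient.mk_surjective _ (b i)
  refine ⟨Fintype.linearCombination A m, ?_⟩
  rw [← LinearMap.range_eq_top, Fintype.range_linearCombination, ← map_mkQ_eq_top, map_span,
    ← Set.range_comp, show (maximalIdeal A • ⊤ : Submodule A M).mkQ ∘ m = b from funext hm,
    eq_top_iff]
  exact fun x _ ↦ span_le_restrictScalars k A _ (b.span_eq ▸ trivial)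

theorem dim_eq_of_dim_eq_maximalIdeal_pow_general {k A M : Type*} [Field k] [CommRing A] [Algebra k A]
    [IsLocalRing A]
    [AddCommGroup M] [Module A M] [Module k M] [IsScalarTower k A M] [Module.Finite A M]
    (hfd : ∀ n : ℕ, FiniteDimensional k (A ⧸ (maximalIdeal A ^ n)))
    (H : ∀ n : ℕ, 0 < n →
      finrank k (M ⧸ ((maximalIdeal A ^ n) • ⊤ : Submodule A M)) =
        finrank k (A ⧸ (maximalIdeal A ^ n)) *
          finrank k (M ⧸ ((maximalIdeal A) • ⊤ : Submodule A M))) :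
    ∀ I : Ideal A, FiniteDimensional k (A ⧸ I) →
      finrank k (M ⧸ (I • ⊤ : Submodule A M)) =
        finrank k (A ⧸ I) *
          finrank k (M ⧸ ((maximalIdeal A) • ⊤ : Submodule A M)) := by
  intro I hI
  have : FiniteDimensional k (A ⧸ maximalIdeal A) := pow_one (maximalIdeal A) ▸ hfd 1
  have := finiteDimensional_quotient_smul_top (k := k) (M := M) (maximalIdeal A)
  obtain ⟨φ, hφ⟩ := exists_surjective_of_finrank_quotient_smul_top k (A := A) (M := M)
  have hker (J : Ideal A) [FiniteDimensional k (A ⧸ J)] :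
      finrank k (M ⧸ (J • ⊤ : Submodule A M)) =
          finrank k (A ⧸ J) * finrank k (M ⧸ (maximalIdeal A • ⊤ : Submodule A M)) ↔
        LinearMap.ker φ ≤ J • ⊤ := by
    rw [← finrank_quotient_smul_top_eq_iff (k := k) J hφ, finrank_pi_quotient_smul_top,
      Fintype.card_fin, mul_comm]
  have : IsArtinianRing (A ⧸ I) := isArtinian_of_tower k inferInstance
  obtain ⟨n, hn⟩ := exists_maximalIdeal_pow_le_of_isArtinianRing_quotient I
  have := hfd (n + 1)
  have hker_pow : LinearMap.ker φ ≤ maximalIdeal A ^ (n + 1) • ⊤ :=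
    (hker _).mp (H (n + 1) n.succ_pos)
  exact (hker I).mpr
    (hker_pow.trans (smul_mono_left ((Ideal.pow_le_pow_right n.le_succ).trans hn)))

/-- If the dimension equalities `dim_k (M ⊗_A A/𝔪ⁿ) = dim_k (A/𝔪ⁿ) · dim_k (M ⊗_A k)` hold
for all powers of the maximal ideal, then the analogous equality holds for every ideal of
finite colength. -/
theorem dim_eq_of_dim_eq_maximalIdeal_pow {k A M : Type*} [Field k] [CommRing A] [Algebra k A]
    [IsLocalRing A] [IsNoetherianRing A]
    [AddCommGroup M] [Module A M] [Module k M] [IsScalarTower k A M] [Module.Finite A M]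
    (hres : Function.Bijective (algebraMap k (ResidueField A)))
    (hfd : ∀ n : ℕ, FiniteDimensional k (A ⧸ (maximalIdeal A ^ n)))
    (H : ∀ n : ℕ, 0 < n →
      finrank k (M ⧸ ((maximalIdeal A ^ n) • ⊤ : Submodule A M)) =
        finrank k (A ⧸ (maximalIdeal A ^ n)) *
          finrank k (M ⧸ ((maximalIdeal A) • ⊤ : Submodule A M))) :
    ∀ I : Ideal A, FiniteDimensional k (A ⧸ I) →
      finrank k (M ⧸ (I • ⊤ : Submodule A M)) =
        finrank k (A ⧸ I) *
          finrank k (M ⧸ ((maximalIdeal A) • ⊤ : Submodule A M)) :=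
  dim_eq_of_dim_eq_maximalIdeal_pow_general hfd H
end
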